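/- Let H be a hypersurface in an initial data set satisfying ∫_H |∇v|² + Q_H v² dA ≥ 0 for all v ∈ C_c^∞(H\Σ) (stability of a MOTS) and suppose the DEC gives Q_H ≤ ½S_H - ½|h_{M|H}+h_H|². Then for the conformal Laplacian L_H = -Δ + ((n-2)/(4(n-1)))·S_H (on an (n-1)-dimensional H, with dimension parameter as in the paper) one has, for all v ∈ C_c^∞(H\Σ): ∫_H v·L_H v dA ≥ ((n-2)/(4(n-1)))·∫_H |∇v|² + |h_{M|H}+h_H|²·v² dA. -/
import Mathlib


open MeasureTheory

/-- Stability of a MOTS plus the DEC bound on `Q_H` imply the lower bound for the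
conformal Laplacian: `∫ v·L_H v ≥ ((n-2)/(4(n-1)))·∫ |∇v|² + |h_{M|H}+h_H|²·v²`.
Here `gradsq = |∇v|²`, `vsq = v²`, `hsq = |h_{M|H}+h_H|²`, `Lv = v·L_H v` pointwise,
with `∫ v·L_H v = ∫ |∇v|² + ((n-2)/(4(n-1)))·S_H·v²`. -/
theorem conformal_laplacian_lower_bound {α : Type*} [MeasurableSpace α]
    (μ : Measure α) (n : ℕ) (hn : 4 ≤ n)
    (gradsq vsq S hsq QH Lv : α → ℝ)
    (hgrad : ∀ x, 0 ≤ gradsq x) (hvsq : ∀ x, 0 ≤ vsq x) (hhsq : ∀ x, 0 ≤ hsq x)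
    (hint1 : Integrable gradsq μ)
    (hint2 : Integrable (fun x => QH x * vsq x) μ)
    (hint3 : Integrable (fun x => S x * vsq x) μ)
    (hint4 : Integrable (fun x => hsq x * vsq x) μ)
    (hstab : 0 ≤ ∫ x, (gradsq x + QH x * vsq x) ∂μ)
    (hdec : ∀ x, QH x ≤ (1 / 2) * S x - (1 / 2) * hsq x)
    (hid : (∫ x, Lv x ∂μ)
      = ∫ x, (gradsq x + ((n : ℝ) - 2) / (4 * ((n : ℝ) - 1)) * S x * vsq x) ∂μ) :
    (∫ x, Lv x ∂μ)
      ≥ ((n : ℝ) - 2) / (4 * ((n : ℝ) - 1)) *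
          ∫ x, (gradsq x + hsq x * vsq x) ∂μ := by
  set c : ℝ := ((n : ℝ) - 2) / (4 * ((n : ℝ) - 1)) with hc_def
  have hn' : (4 : ℝ) ≤ (n : ℝ) := by exact_mod_cast hn
  have hden : (0 : ℝ) < 4 * ((n : ℝ) - 1) := by linarith
  have hc : 0 ≤ c := div_nonneg (by linarith) hden.le
  have h3c : 3 * c ≤ 1 := by
    have h1 : 3 * c = (3 * ((n : ℝ) - 2)) / (4 * ((n : ℝ) - 1)) := by
      rw [hc_def]; ring
    rw [h1, div_le_one hden]; linarith
  set A := ∫ x, gradsq x ∂μ with hA_def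
  set B := ∫ x, S x * vsq x ∂μ with hB_def
  set C := ∫ x, hsq x * vsq x ∂μ with hC_def
  have hA : 0 ≤ A := integral_nonneg hgrad
  -- stability rewritten
  have hstab' : 0 ≤ A + ∫ x, QH x * vsq x ∂μ := by
    rwa [← integral_add hint1 hint2]
  -- pointwise DEC bound integrated
  have hQle : (∫ x, QH x * vsq x ∂μ)
      ≤ ∫ x, ((1/2) * (S x * vsq x) - (1/2) * (hsq x * vsq x)) ∂μ := by
    apply integral_mono hint2 ((hint3.const_mul _).sub (hint4.const_mul _))
    intro x
    simp only [Pi.sub_apply]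
    have h := hdec x
    have hv := hvsq x
    nlinarith [mul_le_mul_of_nonneg_right h hv]
  have hQint : (∫ x, ((1/2) * (S x * vsq x) - (1/2) * (hsq x * vsq x)) ∂μ)
      = (1/2) * B - (1/2) * C := by
    rw [integral_sub (hint3.const_mul _) (hint4.const_mul _),
      integral_const_mul, integral_const_mul]
  have hkey : 0 ≤ A + (1/2) * B - (1/2) * C := by
    rw [hQint] at hQle; linarith
  -- rewrite hid
  have hint5 : Integrable (fun x => c * (S x * vsq x)) μ := hint3.const_mul _
  have hidL : (∫ x, Lv x ∂μ) = A + c * B := by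
    rw [hid]
    have : (fun x => gradsq x + c * S x * vsq x)
        = fun x => gradsq x + c * (S x * vsq x) := by
      funext x; ring
    rw [this, integral_add hint1 hint5, integral_const_mul]
  have hRHS : (∫ x, (gradsq x + hsq x * vsq x) ∂μ) = A + C :=
    integral_add hint1 hint4
  rw [hidL, hRHS, ge_iff_le]
  nlinarith [mul_nonneg hc hkey, mul_nonneg (by linarith : (0:ℝ) ≤ 1 - 3*c) hA]
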